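/- arXiv:1606.06838 — 2 statements merged into one kernel-verified Lean document; each statement's English description precedes it below -/
import Mathlib

section
/- Let n ≥ 2 and let M = [m_{ij}] be an n×n real B-Nekrasov matrix with decomposition M = B⁺ + C such that for each i = 1,…,n−1 there exists k > i with m_{ik} < r_i⁺. Let W = diag(w_1,…,w_n) with w_i = h_i(B⁺)/(m_{ii} − r_i⁺) for i = 1,…,n−1 and w_n = h_n(B⁺)/(m_{nn} − r_n⁺) + ε for a fixed ε ∈ (0, 1 − h_n(B⁺)/(m_{nn} − r_n⁺)), and suppose that B̄ = B⁺W = [b̄_{ij}] is a strictly diagonally dominant Z-matrix. Set β_i = b̄_{ii} − Σ_{j≠i} |b̄_{ij}|, δ_i = β_i/w_i, and δ = min_i δ_i. Then for every diagonal matrix D = diag(d_1,…,d_n) with 0 ≤ d_i ≤ 1 for all i, the matrix I − D + DM is invertible and ‖(I − D + DM)^{-1}‖_∞ ≤ (n − 1)(max_i w_i)/(min{δ, 1} · min_i w_i). -/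
open Finset

noncomputable def nekH {n : ℕ} {𝕜 : Type*} [RCLike 𝕜] (A : Matrix (Fin n) (Fin n) 𝕜) : Fin n → ℝ
  | i =>
    (∑ j : Fin n, if h : j < i then ‖A i j‖ / ‖A j j‖ * nekH A j else 0)
      + ∑ j : Fin n, if i < j then ‖A i j‖ else 0
termination_by i => i.val
decreasing_by exact h

def IsNekrasov {n : ℕ} {𝕜 : Type*} [RCLike 𝕜] (A : Matrix (Fin n) (Fin n) 𝕜) : Prop :=
  ∀ i, nekH A i < ‖A i i‖

noncomputable def nekZ {n : ℕ} {𝕜 : Type*} [RCLike 𝕜] (A : Matrix (Fin n) (Fin n) 𝕜) : Fin n → ℝ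
  | i => (∑ j : Fin n, if h : j < i then ‖A i j‖ / ‖A j j‖ * nekZ A j else 0) + 1
termination_by i => i.val
decreasing_by exact h

noncomputable def nekEta {n : ℕ} {𝕜 : Type*} [RCLike 𝕜] (M : Matrix (Fin n) (Fin n) 𝕜) : Fin n → ℝ
  | i => (∑ j : Fin n, if h : j < i then ‖M i j‖ / min ‖M j j‖ 1 * nekEta M j else 0) + 1
termination_by i => i.val
decreasing_by exact h

noncomputable def linftyNorm {n : ℕ} {𝕜 : Type*} [RCLike 𝕜] (A : Matrix (Fin n) (Fin n) 𝕜) : ℝ :=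
  ⨆ i, ∑ j, ‖A i j‖

noncomputable def rPlus {n : ℕ} (M : Matrix (Fin n) (Fin n) ℝ) (i : Fin n) : ℝ :=
  Finset.fold max 0 (fun j => M i j) (Finset.univ.erase i)

noncomputable def BPlus {n : ℕ} (M : Matrix (Fin n) (Fin n) ℝ) : Matrix (Fin n) (Fin n) ℝ :=
  Matrix.of fun i j => M i j - rPlus M i

def IsBNekrasov {n : ℕ} (M : Matrix (Fin n) (Fin n) ℝ) : Prop :=
  IsNekrasov (BPlus M) ∧ ∀ i, 0 < BPlus M i i

def IsLCPSolution {n : ℕ} (M : Matrix (Fin n) (Fin n) ℝ) (q x : Fin n → ℝ) : Prop :=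
  (∀ i, 0 ≤ x i) ∧ (∀ i, 0 ≤ (M.mulVec x + q) i) ∧ ∑ i, (M.mulVec x + q) i * x i = 0

def IsPMatrix {n : ℕ} (M : Matrix (Fin n) (Fin n) ℝ) : Prop :=
  ∀ S : Finset (Fin n), 0 < (M.submatrix (fun i : S => (i : Fin n)) (fun j : S => (j : Fin n))).det

/-!
Write `I - D + DM = K + v 𝟙ᵀ` with `K = I - D + DB⁺` and `v = D r⁺ ≥ 0`. The weights `wᵢ` are
positive (each row of `B⁺` but the last has a nonzero entry right of the diagonal, and `ε > 0`),
and every row of `KW` is a convex combination of the rows of `W` and of `B⁺W`, so `KW` is a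
Z-matrix whose rows exceed diagonal dominance by at least `ρ = min(δ, 1) · min w`. Such a matrix
satisfies `ρ‖x‖∞ ≤ ‖KWx‖∞` and is inverse-nonnegative. Given `x`, let `y = (K + v 𝟙ᵀ)x`,
`s = Σ xⱼ`, `u = W(KW)⁻¹v ≥ 0` and `g = x + s u`. Then `Kg = y`, whence `ρ‖g‖∞ ≤ (max w)‖y‖∞`;
and `x = g - (Σ xⱼ) u` with `u ≥ 0` forces `|xᵢ| ≤ (n - 1)‖g‖∞` once `n ≥ 2`.
-/

open Matrix

section

variable {ι : Type*} [Fintype ι]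

theorem exists_norm_eq_pi_norm [Nonempty ι] (x : ι → ℝ) : ∃ i, ‖x‖ = |x i| := by
  obtain ⟨i, -, hi⟩ := exists_max_image univ (fun i => |x i|) univ_nonempty
  exact ⟨i, le_antisymm ((pi_norm_le_iff_of_nonempty _).2 fun j => hi j (mem_univ j))
    (norm_le_pi_norm x i)⟩

theorem abs_sum_erase_le_card_sub_one_mul_norm [DecidableEq ι] (g : ι → ℝ) (i : ι) :
    |∑ j ∈ univ.erase i, g j| ≤ (Fintype.card ι - 1) * ‖g‖ :=
  calc |∑ j ∈ univ.erase i, g j| ≤ ∑ j ∈ univ.erase i, ‖g j‖ := abs_sum_le_sum_abs _ _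
    _ ≤ (univ.erase i).card • ‖g‖ := sum_le_card_nsmul _ _ _ fun j _ => norm_le_pi_norm g j
    _ = (Fintype.card ι - 1) * ‖g‖ := by
      rw [card_erase_of_mem (mem_univ i), card_univ, nsmul_eq_mul,
        Nat.cast_sub (Fintype.card_pos_iff.2 ⟨i⟩), Nat.cast_one]

theorem norm_le_card_sub_one_mul_norm [DecidableEq ι] {x g u : ι → ℝ} (hcard : 2 ≤ Fintype.card ι)
    (hu : 0 ≤ u) (hx : x = g - (∑ j, x j) • u) :
    ‖x‖ ≤ (Fintype.card ι - 1) * ‖g‖ := by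
  have hcard' : (2 : ℝ) ≤ Fintype.card ι := by exact_mod_cast hcard
  set s := ∑ j, x j
  set σ := ∑ j, u j
  have hσ : 0 ≤ σ := sum_nonneg fun j _ => hu j
  have hs : s * (1 + σ) = ∑ j, g j := by
    have h := congrArg (fun y : ι → ℝ => ∑ j, y j) hx
    simp only [Pi.sub_apply, Pi.smul_apply, smul_eq_mul, sum_sub_distrib, ← mul_sum] at h
    linarith
  refine (pi_norm_le_iff_of_nonneg (mul_nonneg (by linarith) (norm_nonneg g))).2 fun i => ?_
  have hui : u i ≤ σ := single_le_sum (fun j _ => hu j) (mem_univ i)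
  have hgi : |g i| ≤ ‖g‖ := by simpa only [Real.norm_eq_abs] using norm_le_pi_norm g i
  have hrest := abs_sum_erase_le_card_sub_one_mul_norm g i
  have hxi : (1 + σ) * x i = (1 + σ - u i) * g i - u i * ∑ j ∈ univ.erase i, g j := by
    have hxi' : x i = g i - s * u i := congrFun hx i
    rw [← add_sum_erase _ _ (mem_univ i)] at hs
    linear_combination (1 + σ) * hxi' - u i * hs
  have hbound : (1 + σ) * |x i| ≤ (1 + σ) * ((Fintype.card ι - 1) * ‖g‖) :=
    calc (1 + σ) * |x i| = |(1 + σ - u i) * g i - u i * ∑ j ∈ univ.erase i, g j| := by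
          rw [← hxi, abs_mul, abs_of_nonneg (by positivity : (0 : ℝ) ≤ 1 + σ)]
      _ ≤ (1 + σ - u i) * |g i| + u i * |∑ j ∈ univ.erase i, g j| := by
          refine (abs_sub _ _).trans_eq ?_
          rw [abs_mul, abs_mul, abs_of_nonneg (by linarith), abs_of_nonneg (hu i)]
      _ ≤ (1 + σ - u i) * ‖g‖ + u i * ((Fintype.card ι - 1) * ‖g‖) := by
          gcongr
          · linarith
          · exact hu i
      _ ≤ (1 + σ) * ((Fintype.card ι - 1) * ‖g‖) := by
          linarith [mul_nonneg (mul_nonneg (by linarith : (0 : ℝ) ≤ Fintype.card ι - 2)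
            (by linarith : 0 ≤ 1 + σ - u i)) (norm_nonneg g)]
  simpa only [Real.norm_eq_abs] using le_of_mul_le_mul_left hbound (by positivity)

end

namespace Matrix

variable {ι : Type*} [Fintype ι] [DecidableEq ι]

def diagExcess (A : Matrix ι ι ℝ) (i : ι) : ℝ :=
  A i i - ∑ j ∈ univ.erase i, |A i j|

theorem mulVec_eq_add_sum_erase (A : Matrix ι ι ℝ) (x : ι → ℝ) (i : ι) :
    (A *ᵥ x) i = A i i * x i + ∑ j ∈ univ.erase i, A i j * x j := by
  rw [mulVec, dotProduct, ← add_sum_erase _ _ (mem_univ i)]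

theorem mul_norm_le_norm_mulVec {A : Matrix ι ι ℝ} {ρ : ℝ} (hA : ∀ i, ρ ≤ A.diagExcess i)
    (x : ι → ℝ) : ρ * ‖x‖ ≤ ‖A *ᵥ x‖ := by
  cases isEmpty_or_nonempty ι
  · simp [Subsingleton.elim x 0]
  obtain ⟨i, hi⟩ := exists_norm_eq_pi_norm x
  have hx : ∀ j, |x j| ≤ |x i| := fun j => by
    simpa only [Real.norm_eq_abs, hi] using norm_le_pi_norm x j
  have hoff : |∑ j ∈ univ.erase i, A i j * x j| ≤ (∑ j ∈ univ.erase i, |A i j|) * |x i| :=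
    calc |∑ j ∈ univ.erase i, A i j * x j|
        ≤ ∑ j ∈ univ.erase i, |A i j| * |x j| := by
          simpa only [abs_mul] using abs_sum_le_sum_abs (fun j => A i j * x j) (univ.erase i)
      _ ≤ ∑ j ∈ univ.erase i, |A i j| * |x i| :=
          sum_le_sum fun j _ => mul_le_mul_of_nonneg_left (hx j) (abs_nonneg _)
      _ = (∑ j ∈ univ.erase i, |A i j|) * |x i| := (sum_mul ..).symm
  calc ρ * ‖x‖ ≤ A.diagExcess i * |x i| := by
        rw [hi]; exact mul_le_mul_of_nonneg_right (hA i) (abs_nonneg _)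
    _ ≤ |A i i * x i| - |∑ j ∈ univ.erase i, A i j * x j| := by
      rw [diagExcess, sub_mul, abs_mul]
      gcongr
      exact le_abs_self _
    _ ≤ |(A *ᵥ x) i| := by
      rw [mulVec_eq_add_sum_erase]
      exact abs_sub_abs_le_abs_add _ _
    _ ≤ ‖A *ᵥ x‖ := by simpa only [Real.norm_eq_abs] using norm_le_pi_norm (A *ᵥ x) i

theorem nonneg_of_nonneg_mulVec {A : Matrix ι ι ℝ} (hZ : ∀ i j, i ≠ j → A i j ≤ 0)
    (hA : ∀ i, 0 < A.diagExcess i) {z : ι → ℝ} (hz : 0 ≤ A *ᵥ z) : 0 ≤ z := by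
  by_contra hneg
  obtain ⟨i, hi⟩ : ∃ i, z i < 0 := by simpa [Pi.le_def] using hneg
  obtain ⟨k, -, hk⟩ := exists_min_image univ z ⟨i, mem_univ i⟩
  have hzk : z k < 0 := (hk i (mem_univ i)).trans_lt hi
  have hrow : ∑ j, A k j = A.diagExcess k := by
    rw [diagExcess, ← add_sum_erase _ _ (mem_univ k), sub_eq_add_neg, ← sum_neg_distrib]
    congr 1
    refine sum_congr rfl fun j hj => ?_
    rw [abs_of_nonpos (hZ k j (ne_of_mem_erase hj).symm), neg_neg]
  have hle : (A *ᵥ z) k ≤ (∑ j, A k j) * z k := by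
    rw [mulVec, dotProduct, sum_mul]
    refine sum_le_sum fun j _ => ?_
    rcases eq_or_ne k j with rfl | hkj
    · rfl
    · exact mul_le_mul_of_nonpos_left (hk j (mem_univ j)) (hZ k j hkj)
  have hzk' : 0 ≤ (A *ᵥ z) k := hz k
  rw [hrow] at hle
  linarith [mul_neg_of_pos_of_neg (hA k) hzk]

theorem isUnit_of_norm_le_mul_norm_mulVec {A : Matrix ι ι ℝ} {C : ℝ}
    (h : ∀ x, ‖x‖ ≤ C * ‖A *ᵥ x‖) : IsUnit A := by
  refine mulVec_injective_iff_isUnit.1 fun x y hxy => ?_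
  have := h (x - y)
  rw [mulVec_sub, hxy, sub_self, norm_zero, mul_zero] at this
  exact sub_eq_zero.1 (norm_le_zero_iff.1 this)

theorem mul_norm_le_mul_norm_mulVec_of_mul_diagonal [Nonempty ι] {B : Matrix ι ι ℝ}
    {w : ι → ℝ} {ρ wmax : ℝ} (hw : ∀ i, 0 < w i) (hwmax : ∀ i, w i ≤ wmax) (hρ : 0 ≤ ρ)
    (hB : ∀ i, ρ ≤ (B * diagonal w).diagExcess i) (g : ι → ℝ) :
    ρ * ‖g‖ ≤ wmax * ‖B *ᵥ g‖ := by
  set q : ι → ℝ := fun j => g j / w j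
  have hq : (B * diagonal w) *ᵥ q = B *ᵥ g := by
    rw [← mulVec_mulVec]
    congr 1
    funext j
    rw [mulVec_diagonal]
    exact mul_div_cancel₀ _ (hw j).ne'
  have hwmax0 : 0 ≤ wmax := (hw (Classical.arbitrary ι)).le.trans (hwmax _)
  have hg : ‖g‖ ≤ wmax * ‖q‖ := (pi_norm_le_iff_of_nonempty _).2 fun j => by
    calc ‖g j‖ = w j * ‖q j‖ := by
          rw [norm_div, Real.norm_of_nonneg (hw j).le, mul_div_cancel₀ _ (hw j).ne']
      _ ≤ wmax * ‖q‖ := mul_le_mul (hwmax j) (norm_le_pi_norm q j) (norm_nonneg _) hwmax0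
  calc ρ * ‖g‖ ≤ wmax * (ρ * ‖q‖) := (mul_le_mul_of_nonneg_left hg hρ).trans_eq (mul_left_comm ..)
    _ ≤ wmax * ‖B *ᵥ g‖ := mul_le_mul_of_nonneg_left (hq ▸ mul_norm_le_norm_mulVec hB q) hwmax0

theorem norm_le_mul_norm_mulVec_add_sum_smul {B : Matrix ι ι ℝ} {w v : ι → ℝ} {ρ wmax : ℝ}
    (hcard : 2 ≤ Fintype.card ι) (hw : ∀ i, 0 < w i) (hwmax : ∀ i, w i ≤ wmax) (hv : 0 ≤ v)
    (hZ : ∀ i j, i ≠ j → (B * diagonal w) i j ≤ 0) (hρ : 0 < ρ)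
    (hB : ∀ i, ρ ≤ (B * diagonal w).diagExcess i) (x : ι → ℝ) :
    ‖x‖ ≤ (Fintype.card ι - 1) * wmax / ρ * ‖B *ᵥ x + (∑ j, x j) • v‖ := by
  have : Nonempty ι := Fintype.card_pos_iff.1 (by omega)
  have hunit : IsUnit (B * diagonal w) := isUnit_of_norm_le_mul_norm_mulVec (C := ρ⁻¹) fun x => by
    rw [← div_eq_inv_mul, le_div_iff₀' hρ]
    exact mul_norm_le_norm_mulVec hB x
  obtain ⟨z, hz⟩ := mulVec_surjective_iff_isUnit.2 hunit v
  have hz0 : 0 ≤ z := nonneg_of_nonneg_mulVec hZ (fun i => hρ.trans_le (hB i)) (hz ▸ hv)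
  set u := diagonal w *ᵥ z
  have hu0 : 0 ≤ u := fun i => show 0 ≤ u i by
    simpa only [u, mulVec_diagonal] using mul_nonneg (hw i).le (hz0 i)
  set g := x + (∑ j, x j) • u
  have hg : B *ᵥ g = B *ᵥ x + (∑ j, x j) • v := by
    rw [mulVec_add, mulVec_smul, mulVec_mulVec, hz]
  have hx : ‖x‖ ≤ (Fintype.card ι - 1) * ‖g‖ :=
    norm_le_card_sub_one_mul_norm hcard hu0 (by simp only [g, add_sub_cancel_right])
  have hgB := mul_norm_le_mul_norm_mulVec_of_mul_diagonal hw hwmax hρ.le hB g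
  rw [hg] at hgB
  have hcard' : (0 : ℝ) ≤ Fintype.card ι - 1 := by
    have : (2 : ℝ) ≤ Fintype.card ι := by exact_mod_cast hcard
    linarith
  calc ‖x‖ ≤ (Fintype.card ι - 1) * ‖g‖ := hx
    _ ≤ (Fintype.card ι - 1) * (wmax / ρ * ‖B *ᵥ x + (∑ j, x j) • v‖) := by
      gcongr
      rwa [div_mul_eq_mul_div, le_div_iff₀' hρ]
    _ = _ := by ring

theorem diagExcess_diagonal_add_diagonal_mul {A : Matrix ι ι ℝ} {a d : ι → ℝ} {i : ι}
    (hd : 0 ≤ d i) :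
    (diagonal a + diagonal d * A).diagExcess i = a i + d i * A.diagExcess i := by
  have hoff : ∀ j ∈ univ.erase i, |(diagonal a + diagonal d * A) i j| = d i * |A i j| :=
    fun j hj => by
      rw [add_apply, diagonal_apply_ne _ (ne_of_mem_erase hj).symm, zero_add, diagonal_mul,
        abs_mul, abs_of_nonneg hd]
  rw [diagExcess, diagExcess, sum_congr rfl hoff, ← mul_sum, add_apply, diagonal_mul,
    diagonal_apply_eq]
  ring

theorem one_sub_diagonal_add_diagonal_mul_mul_diagonal (B : Matrix ι ι ℝ) (d w : ι → ℝ) :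
    (1 - diagonal d + diagonal d * B) * diagonal w =
      diagonal (fun i => (1 - d i) * w i) + diagonal d * (B * diagonal w) := by
  rw [add_mul, sub_mul, one_mul, diagonal_mul_diagonal, Matrix.mul_assoc, diagonal_sub]
  congr 2
  funext i
  ring

theorem le_diagExcess_one_sub_diagonal_add_diagonal_mul_mul_diagonal {B : Matrix ι ι ℝ}
    {d w : ι → ℝ} {i : ι} {ρ : ℝ} (hd₀ : 0 ≤ d i) (hd₁ : d i ≤ 1) (hw : ρ ≤ w i)
    (hB : ρ ≤ (B * diagonal w).diagExcess i) :
    ρ ≤ ((1 - diagonal d + diagonal d * B) * diagonal w).diagExcess i := by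
  rw [one_sub_diagonal_add_diagonal_mul_mul_diagonal, diagExcess_diagonal_add_diagonal_mul hd₀]
  nlinarith

theorem one_sub_diagonal_add_diagonal_mul_mul_diagonal_apply_nonpos {B : Matrix ι ι ℝ}
    {d w : ι → ℝ} {i j : ι} (hij : i ≠ j) (hd : 0 ≤ d i) (hB : (B * diagonal w) i j ≤ 0) :
    ((1 - diagonal d + diagonal d * B) * diagonal w) i j ≤ 0 := by
  rw [one_sub_diagonal_add_diagonal_mul_mul_diagonal, add_apply, diagonal_apply_ne _ hij,
    zero_add, diagonal_mul]
  exact mul_nonpos_of_nonneg_of_nonpos hd hB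

end Matrix

theorem linftyNorm_le_of_norm_mulVec_le {n : ℕ} {A : Matrix (Fin n) (Fin n) ℝ} {C : ℝ}
    (hC : 0 ≤ C) (h : ∀ x, ‖A *ᵥ x‖ ≤ C * ‖x‖) : linftyNorm A ≤ C := by
  refine Real.iSup_le (fun i => ?_) hC
  set s : Fin n → ℝ := fun j => SignType.sign (A i j)
  have hs : ‖s‖ ≤ 1 := (pi_norm_le_iff_of_nonneg zero_le_one).2 fun j => by
    rcases lt_trichotomy (A i j) 0 with h | h | h <;> simp [s, h]
  calc ∑ j, ‖A i j‖ = (A *ᵥ s) i := by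
        simp only [mulVec, dotProduct, s, self_mul_sign, Real.norm_eq_abs]
    _ ≤ ‖A *ᵥ s‖ := (le_abs_self _).trans (by simpa using norm_le_pi_norm (A *ᵥ s) i)
    _ ≤ C * ‖s‖ := h s
    _ ≤ C := mul_le_of_le_one_right hC hs

theorem isUnit_det_and_linftyNorm_inv_le {n : ℕ} {A : Matrix (Fin n) (Fin n) ℝ} {C : ℝ}
    (hC : 0 ≤ C) (h : ∀ x, ‖x‖ ≤ C * ‖A *ᵥ x‖) : IsUnit A.det ∧ linftyNorm A⁻¹ ≤ C := by
  have hA := (isUnit_iff_isUnit_det A).1 (isUnit_of_norm_le_mul_norm_mulVec h)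
  refine ⟨hA, linftyNorm_le_of_norm_mulVec_le hC fun y => ?_⟩
  simpa [mulVec_mulVec, mul_nonsing_inv A hA] using h (A⁻¹ *ᵥ y)

section Nekrasov

variable {n : ℕ}

theorem nekH_nonneg {𝕜 : Type*} [RCLike 𝕜] (A : Matrix (Fin n) (Fin n) 𝕜) (i : Fin n) :
    0 ≤ nekH A i := by
  induction i using WellFoundedLT.induction with
  | _ i ih =>
    rw [nekH]
    refine add_nonneg (sum_nonneg fun j _ => ?_) (sum_nonneg fun j _ => ?_)
    · split_ifs with h
      · exact mul_nonneg (by positivity) (ih j h)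
      · exact le_rfl
    · split_ifs <;> positivity

theorem nekH_pos_of_ne_zero {𝕜 : Type*} [RCLike 𝕜] {A : Matrix (Fin n) (Fin n) 𝕜} {i k : Fin n}
    (hik : i < k) (hk : A i k ≠ 0) : 0 < nekH A i := by
  rw [nekH]
  refine add_pos_of_nonneg_of_pos (sum_nonneg fun j _ => ?_) ?_
  · split_ifs with h
    · exact mul_nonneg (by positivity) (nekH_nonneg A j)
    · exact le_rfl
  · calc 0 < ‖A i k‖ := norm_pos_iff.2 hk
      _ = if i < k then ‖A i k‖ else 0 := (if_pos hik).symm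
      _ ≤ ∑ j, if i < j then ‖A i j‖ else 0 :=
        single_le_sum (f := fun j => if i < j then ‖A i j‖ else 0)
          (fun j _ => by split_ifs <;> positivity) (mem_univ k)

theorem rPlus_nonneg (M : Matrix (Fin n) (Fin n) ℝ) (i : Fin n) : 0 ≤ rPlus M i :=
  (le_fold_max 0).2 (Or.inl le_rfl)

theorem one_sub_diagonal_add_diagonal_mul_mulVec (M : Matrix (Fin n) (Fin n) ℝ)
    (d x : Fin n → ℝ) :
    (1 - diagonal d + diagonal d * M) *ᵥ x =
      (1 - diagonal d + diagonal d * BPlus M) *ᵥ x + (∑ j, x j) • (d * rPlus M) := by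
  ext i
  simp only [add_mulVec, sub_mulVec, Pi.add_apply, Pi.sub_apply, Pi.smul_apply, Pi.mul_apply,
    smul_eq_mul, ← mulVec_mulVec, mulVec_diagonal, BPlus]
  simp only [mulVec, dotProduct, of_apply, sub_mul, sum_sub_distrib, ← mul_sum]
  ring

end Nekrasov

section WeightBound

variable {ι : Type*} [Fintype ι] (hne : (univ : Finset ι).Nonempty) {w β : ι → ℝ}

theorem min_inf'_div_one_mul_inf'_pos (hw : ∀ i, 0 < w i) (hβ : ∀ i, 0 < β i) :
    0 < min (univ.inf' hne fun i => β i / w i) 1 * univ.inf' hne w :=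
  mul_pos (lt_min ((lt_inf'_iff _).2 fun i _ => div_pos (hβ i) (hw i)) one_pos)
    ((lt_inf'_iff _).2 fun i _ => hw i)

theorem min_inf'_div_one_mul_inf'_le_left (hw : ∀ i, 0 < w i) (i : ι) :
    min (univ.inf' hne fun i => β i / w i) 1 * univ.inf' hne w ≤ w i :=
  (mul_le_mul (min_le_right _ _) (inf'_le _ (mem_univ i))
    ((lt_inf'_iff _).2 fun i _ => hw i).le zero_le_one).trans_eq (one_mul _)

theorem min_inf'_div_one_mul_inf'_le_right (hw : ∀ i, 0 < w i) (hβ : ∀ i, 0 ≤ β i) (i : ι) :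
    min (univ.inf' hne fun i => β i / w i) 1 * univ.inf' hne w ≤ β i :=
  (mul_le_mul ((min_le_left _ _).trans (inf'_le _ (mem_univ i))) (inf'_le _ (mem_univ i))
    ((lt_inf'_iff _).2 fun i _ => hw i).le (div_nonneg (hβ i) (hw i).le)).trans_eq
    (div_mul_cancel₀ _ (hw i).ne')

end WeightBound

theorem nekrasovWeights_pos {n : ℕ} {M : Matrix (Fin n) (Fin n) ℝ}
    (hB : ∀ i, 0 < BPlus M i i)
    (hrow : ∀ i : Fin n, i.val + 1 < n → ∃ k, i < k ∧ M i k < rPlus M i)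
    {ε : ℝ} (hε : 0 < ε) {w : Fin n → ℝ}
    (hw : ∀ i : Fin n, i.val + 1 < n → w i = nekH (BPlus M) i / (M i i - rPlus M i))
    {l : Fin n} (hl : l.val + 1 = n)
    (hwl : w l = nekH (BPlus M) l / (M l l - rPlus M l) + ε) (i : Fin n) : 0 < w i := by
  by_cases hi : i.val + 1 < n
  · obtain ⟨k, hik, hk⟩ := hrow i hi
    rw [hw i hi]
    exact div_pos (nekH_pos_of_ne_zero hik (sub_ne_zero.2 hk.ne)) (hB i)
  · obtain rfl : i = l := Fin.ext (by omega)
    rw [hwl]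
    exact add_pos_of_nonneg_of_pos (div_nonneg (nekH_nonneg _ _) (hB _).le) hε

theorem stmt15 {n : ℕ} (hn : 2 ≤ n) (M : Matrix (Fin n) (Fin n) ℝ)
    (hBN : IsBNekrasov M)
    (hrow : ∀ i : Fin n, i.val + 1 < n → ∃ k, i < k ∧ M i k < rPlus M i)
    (ε : ℝ) (hε : 0 < ε)
    (w : Fin n → ℝ)
    (hw : ∀ i : Fin n, i.val + 1 < n → w i = nekH (BPlus M) i / (M i i - rPlus M i))
    (hwn : w ⟨n - 1, by omega⟩ = nekH (BPlus M) ⟨n - 1, by omega⟩ /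
      (M ⟨n - 1, by omega⟩ ⟨n - 1, by omega⟩ - rPlus M ⟨n - 1, by omega⟩) + ε)
    (hZ : ∀ i j, i ≠ j → (BPlus M * Matrix.diagonal w) i j ≤ 0)
    (hSDD : ∀ i, ∑ j ∈ Finset.univ.erase i, |(BPlus M * Matrix.diagonal w) i j| <
      |(BPlus M * Matrix.diagonal w) i i|)
    (β δ : Fin n → ℝ)
    (hβ : ∀ i, β i = (BPlus M * Matrix.diagonal w) i i -
      ∑ j ∈ Finset.univ.erase i, |(BPlus M * Matrix.diagonal w) i j|)
    (hδ : ∀ i, δ i = β i / w i)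
    (d : Fin n → ℝ) (hd : ∀ i, 0 ≤ d i ∧ d i ≤ 1) :
    IsUnit (1 - Matrix.diagonal d + Matrix.diagonal d * M).det ∧
      linftyNorm (1 - Matrix.diagonal d + Matrix.diagonal d * M)⁻¹ ≤
        (n - 1 : ℝ) * Finset.univ.sup' ⟨⟨0, by omega⟩, Finset.mem_univ _⟩ w /
          (min (Finset.univ.inf' ⟨⟨0, by omega⟩, Finset.mem_univ _⟩ δ) 1 *
            Finset.univ.inf' ⟨⟨0, by omega⟩, Finset.mem_univ _⟩ w) := by
  obtain rfl : δ = fun i => β i / w i := funext hδ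
  obtain rfl : β = (BPlus M * diagonal w).diagExcess := funext hβ
  have hw0 := nekrasovWeights_pos hBN.2 hrow hε hw (Nat.sub_add_cancel (by omega)) hwn
  have hβ0 : ∀ i, 0 < (BPlus M * diagonal w).diagExcess i := fun i => by
    have hii : 0 < (BPlus M * diagonal w) i i := by
      simpa only [mul_diagonal] using mul_pos (hBN.2 i) (hw0 i)
    exact sub_pos.2 (abs_of_pos hii ▸ hSDD i)
  have hne : (univ : Finset (Fin n)).Nonempty := ⟨⟨0, by omega⟩, mem_univ _⟩
  have hρ := min_inf'_div_one_mul_inf'_pos hne hw0 hβ0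
  have hwmax : ∀ i, w i ≤ univ.sup' hne w := fun i => le_sup' w (mem_univ i)
  have hn1 : (0 : ℝ) ≤ n - 1 := sub_nonneg.2 (by exact_mod_cast (by omega : 1 ≤ n))
  refine isUnit_det_and_linftyNorm_inv_le
    (div_nonneg (mul_nonneg hn1 ((hw0 ⟨0, by omega⟩).le.trans (hwmax _))) hρ.le) fun x => ?_
  rw [one_sub_diagonal_add_diagonal_mul_mulVec]
  simpa only [Fintype.card_fin] using norm_le_mul_norm_mulVec_add_sum_smul (v := d * rPlus M)
    (by simpa using hn) hw0 hwmax (fun i => mul_nonneg (hd i).1 (rPlus_nonneg M i))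
    (fun i j hij => one_sub_diagonal_add_diagonal_mul_mul_diagonal_apply_nonpos hij (hd i).1
      (hZ i j hij))
    hρ
    (fun i => le_diagExcess_one_sub_diagonal_add_diagonal_mul_mul_diagonal (hd i).1 (hd i).2
      (min_inf'_div_one_mul_inf'_le_left hne hw0 i)
      (min_inf'_div_one_mul_inf'_le_right hne hw0 (fun i => (hβ0 i).le) i)) x
end

section
/- Let M be an n×n real P-matrix, let q ∈ ℝⁿ, and let x* be the (unique) solution of LCP(M,q). Then for every x ∈ ℝⁿ, ‖x − x*‖_∞ ≤ max_{d ∈ [0,1]^n} ‖(I − D + DM)^{-1}‖_∞ · ‖r(x)‖_∞, where the maximum is taken over all diagonal matrices D = diag(d_1,…,d_n) with 0 ≤ d_i ≤ 1 (all such matrices I − D + DM being invertible since M is a P-matrix). -/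
open Finset

lemma det_padded {n : ℕ} (M : Matrix (Fin n) (Fin n) ℝ) (s : Finset (Fin n)) :
    (Matrix.of fun i j => if i ∈ s then M i j else (1 : Matrix (Fin n) (Fin n) ℝ) i j).det
      = (M.submatrix (fun i : s => (i : Fin n)) (fun j : s => (j : Fin n))).det := by
  classical
  set R := Matrix.of fun i j => if i ∈ s then M i j else (1 : Matrix (Fin n) (Fin n) ℝ) i j with hR
  rw [← Matrix.det_submatrix_equiv_self (Equiv.sumCompl (· ∈ s)) R]
  have hblock : R.submatrix (Equiv.sumCompl (· ∈ s)) (Equiv.sumCompl (· ∈ s)) =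
      Matrix.fromBlocks (M.submatrix (fun i : s => (i : Fin n)) (fun j : s => (j : Fin n)))
        (M.submatrix (fun i : s => (i : Fin n)) (fun j : {j : Fin n // ¬ j ∈ s} => (j : Fin n)))
        0 1 := by
    ext i j
    rcases i with i | i <;> rcases j with j | j <;>
      simp [hR, Matrix.submatrix_apply, Matrix.one_apply, i.2, j.2, Subtype.ext_iff]
    intro h
    exact absurd (h ▸ j.2) i.2
  rw [hblock, Matrix.det_fromBlocks_zero₂₁, Matrix.det_one, mul_one]

lemma detPos {n : ℕ} (M : Matrix (Fin n) (Fin n) ℝ) (hM : IsPMatrix M)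
    (d : Fin n → ℝ) (hd : ∀ i, 0 ≤ d i ∧ d i ≤ 1) :
    0 < (1 - Matrix.diagonal d + Matrix.diagonal d * M).det := by
  classical
  set m : Fin n → (Fin n → ℝ) := fun i => d i • M i with hm
  set m' : Fin n → (Fin n → ℝ) := fun i => (1 - d i) • (1 : Matrix (Fin n) (Fin n) ℝ) i with hm'
  have hdet : (1 - Matrix.diagonal d + Matrix.diagonal d * M).det
      = Matrix.detRowAlternating (m + m') := by
    congr 1
    funext i j
    simp only [hm, hm', Matrix.add_apply, Matrix.sub_apply, Matrix.one_apply,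
      Matrix.diagonal_apply, Matrix.diagonal_mul, Pi.add_apply, Pi.smul_apply, smul_eq_mul]
    split_ifs with h <;> ring
  have hexp : Matrix.detRowAlternating (m + m')
      = ∑ s : Finset (Fin n), Matrix.detRowAlternating (s.piecewise m m') :=
    (Matrix.detRowAlternating (R := ℝ) (n := Fin n)).toMultilinearMap.map_add_univ m m'
  have hterm : ∀ s : Finset (Fin n), Matrix.detRowAlternating (s.piecewise m m')
      = (∏ i, if i ∈ s then d i else 1 - d i) *
        (M.submatrix (fun i : s => (i : Fin n)) (fun j : s => (j : Fin n))).det := by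
    intro s
    have h1 : s.piecewise m m' = fun i => (if i ∈ s then d i else 1 - d i) •
        (Matrix.of fun i j => if i ∈ s then M i j else (1 : Matrix (Fin n) (Fin n) ℝ) i j) i := by
      funext i j
      by_cases h : i ∈ s <;> simp [Finset.piecewise, h, hm, hm']
    rw [h1]
    refine ((Matrix.detRowAlternating (R := ℝ) (n := Fin n)).toMultilinearMap.map_smul_univ
      _ _).trans ?_
    rw [smul_eq_mul, ← det_padded M s]
    rfl
  have hsum1 : (∑ s : Finset (Fin n), ∏ i, if i ∈ s then d i else 1 - d i) = 1 := by
    have hpa := Finset.prod_add d (fun i => 1 - d i) Finset.univ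
    simp only [add_sub_cancel, Finset.prod_const_one] at hpa
    rw [← Finset.powerset_univ]
    refine Eq.trans (Finset.sum_congr rfl fun t _ => ?_) hpa.symm
    rw [show (∏ i, if i ∈ t then d i else 1 - d i)
        = ∏ i, t.piecewise d (fun i => 1 - d i) i from
      Finset.prod_congr rfl fun i _ => by simp [Finset.piecewise]]
    rw [Finset.prod_piecewise Finset.univ t d fun i => 1 - d i, Finset.univ_inter]
  have hwnn : ∀ s : Finset (Fin n), 0 ≤ ∏ i, if i ∈ s then d i else 1 - d i := by
    intro s
    refine Finset.prod_nonneg fun i _ => ?_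
    split_ifs
    · exact (hd i).1
    · linarith [(hd i).2]
  have hex : ∃ s : Finset (Fin n), 0 < ∏ i, if i ∈ s then d i else 1 - d i := by
    by_contra h
    push_neg at h
    have : (∑ s : Finset (Fin n), ∏ i, if i ∈ s then d i else 1 - d i) ≤ 0 :=
      Finset.sum_nonpos fun s _ => h s
    linarith [hsum1]
  obtain ⟨s₀, hs₀⟩ := hex
  rw [hdet, hexp]
  refine Finset.sum_pos' (fun s _ => ?_) ⟨s₀, Finset.mem_univ _, ?_⟩
  · rw [hterm s]; exact mul_nonneg (hwnn s) (hM s).le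
  · rw [hterm s₀]; exact mul_pos hs₀ (hM s₀)

lemma minMVT (a b c e : ℝ) :
    ∃ t, 0 ≤ t ∧ t ≤ 1 ∧ min a b - min c e = (1 - t) * (a - c) + t * (b - e) := by
  have hub : min a b - min c e ≤ max (a - c) (b - e) := by
    rcases min_cases c e with ⟨h1, _⟩ | ⟨h1, _⟩
    · linarith [min_le_left a b, le_max_left (a - c) (b - e)]
    · linarith [min_le_right a b, le_max_right (a - c) (b - e)]
  have hlb : min (a - c) (b - e) ≤ min a b - min c e := by
    rcases min_cases a b with ⟨h1, _⟩ | ⟨h1, _⟩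
    · linarith [min_le_left c e, min_le_left (a - c) (b - e)]
    · linarith [min_le_right c e, min_le_right (a - c) (b - e)]
  set u := a - c
  set w := b - e
  set v := min a b - min c e with hv
  rcases le_total u w with h | h
  · have hu : u ≤ v := by rw [min_eq_left h] at hlb; exact hlb
    have hw : v ≤ w := by rw [max_eq_right h] at hub; exact hub
    rcases eq_or_lt_of_le h with heq | hlt
    · exact ⟨0, le_refl 0, zero_le_one, by rw [← heq] at hw; nlinarith⟩
    · have hne : w - u ≠ 0 := by linarith
      have ht : (v - u) / (w - u) * (w - u) = v - u := div_mul_cancel₀ _ hne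
      refine ⟨(v - u) / (w - u), div_nonneg (by linarith) (by linarith),
        (div_le_one (by linarith)).2 (by linarith), ?_⟩
      linear_combination -ht
  · have hw : w ≤ v := by rw [min_eq_right h] at hlb; exact hlb
    have hu : v ≤ u := by rw [max_eq_left h] at hub; exact hub
    rcases eq_or_lt_of_le h with heq | hlt
    · exact ⟨1, zero_le_one, le_refl 1, by rw [heq] at hw; nlinarith⟩
    · have hne : u - w ≠ 0 := by linarith
      have ht : (u - v) / (u - w) * (u - w) = u - v := div_mul_cancel₀ _ hne
      refine ⟨(u - v) / (u - w), div_nonneg (by linarith) (by linarith),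
        (div_le_one (by linarith)).2 (by linarith), ?_⟩
      linear_combination ht

lemma mulVec_norm_le {n : ℕ} [Nonempty (Fin n)] (B : Matrix (Fin n) (Fin n) ℝ) (v : Fin n → ℝ) :
    ‖B.mulVec v‖ ≤ linftyNorm B * ‖v‖ := by
  have hbdd : BddAbove (Set.range fun i => ∑ j, ‖B i j‖) :=
    (Set.finite_range _).bddAbove
  have hrow : ∀ i, (∑ j, ‖B i j‖) ≤ linftyNorm B := fun i => le_ciSup hbdd i
  have h0 : 0 ≤ linftyNorm B := by
    refine le_trans ?_ (hrow (Classical.arbitrary _))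
    exact Finset.sum_nonneg fun j _ => norm_nonneg _
  rw [pi_norm_le_iff_of_nonneg (mul_nonneg h0 (norm_nonneg v))]
  intro i
  calc ‖B.mulVec v i‖ = |∑ j, B i j * v j| := by rw [Real.norm_eq_abs]; rfl
    _ ≤ ∑ j, |B i j * v j| := Finset.abs_sum_le_sum_abs _ _
    _ ≤ ∑ j, |B i j| * ‖v‖ := by
        refine Finset.sum_le_sum fun j _ => ?_
        rw [abs_mul]
        exact mul_le_mul_of_nonneg_left (by rw [← Real.norm_eq_abs]; exact norm_le_pi_norm v j)
          (abs_nonneg _)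
    _ = (∑ j, ‖B i j‖) * ‖v‖ := by
        rw [Finset.sum_mul]
        simp [Real.norm_eq_abs]
    _ ≤ linftyNorm B * ‖v‖ := mul_le_mul_of_nonneg_right (hrow i) (norm_nonneg v)

lemma bddAboveLemma {n : ℕ} [Nonempty (Fin n)] (M : Matrix (Fin n) (Fin n) ℝ)
    (hM : IsPMatrix M) :
    BddAbove (Set.range fun d : {d : Fin n → ℝ // ∀ i, 0 ≤ d i ∧ d i ≤ 1} =>
      linftyNorm (1 - Matrix.diagonal d.1 + Matrix.diagonal d.1 * M)⁻¹) := by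
  classical
  set Am : (Fin n → ℝ) → Matrix (Fin n) (Fin n) ℝ :=
    fun p => 1 - Matrix.diagonal p + Matrix.diagonal p * M with hAm
  set K : Set (Fin n → ℝ) := Set.univ.pi fun _ => Set.Icc (0:ℝ) 1 with hK
  have hKc : IsCompact K := isCompact_univ_pi fun _ => isCompact_Icc
  have hAc : Continuous Am := by
    apply continuous_matrix
    intro i j
    have hent : ∀ p : Fin n → ℝ, Am p i j
        = (if i = j then (1:ℝ) else 0) - (if i = j then p i else 0) + p i * M i j := by
      intro p
      simp [hAm, Matrix.add_apply, Matrix.sub_apply, Matrix.one_apply,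
        Matrix.diagonal_apply, Matrix.diagonal_mul]
    simp only [hent]
    by_cases h : i = j <;> simp [h] <;> fun_prop
  have hdc : Continuous fun p => (Am p).det := hAc.matrix_det
  have hadc : Continuous fun p => (Am p).adjugate := hAc.matrix_adjugate
  have hmemK : ∀ p ∈ K, ∀ i, 0 ≤ p i ∧ p i ≤ 1 := by
    intro p hp i
    have := hp i (Set.mem_univ i)
    exact ⟨this.1, this.2⟩
  set G : (Fin n → ℝ) → ℝ :=
    fun p => |((Am p).det)⁻¹| * ∑ i, ∑ j, |(Am p).adjugate i j| with hG
  have hGc : ContinuousOn G K := by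
    refine ContinuousOn.mul ?_ ?_
    · exact (hdc.continuousOn.inv₀ fun p hp => (detPos M hM p (hmemK p hp)).ne').abs
    · refine Continuous.continuousOn ?_
      refine continuous_finset_sum _ fun i _ => continuous_finset_sum _ fun j _ => ?_
      exact (hadc.matrix_elem i j).abs
  obtain ⟨C, hC⟩ := (hKc.bddAbove_image hGc)
  refine ⟨C, ?_⟩
  rintro y ⟨d, rfl⟩
  have hdK : d.1 ∈ K := by
    intro i _
    exact ⟨(d.2 i).1, (d.2 i).2⟩
  have hinv : ∀ i j, (Am d.1)⁻¹ i j = ((Am d.1).det)⁻¹ * (Am d.1).adjugate i j := by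
    intro i j
    rw [Matrix.inv_def, Ring.inverse_eq_inv']
    simp [Matrix.smul_apply, smul_eq_mul]
  have h1 : linftyNorm (Am d.1)⁻¹ ≤ G d.1 := by
    refine ciSup_le fun i => ?_
    have hrow : (∑ j, ‖(Am d.1)⁻¹ i j‖)
        = ∑ j, |((Am d.1).det)⁻¹| * |(Am d.1).adjugate i j| := by
      refine Finset.sum_congr rfl fun j _ => ?_
      rw [Real.norm_eq_abs, hinv i j, abs_mul]
    rw [hrow, ← Finset.mul_sum, hG]
    refine mul_le_mul_of_nonneg_left ?_ (abs_nonneg _)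
    exact Finset.single_le_sum
      (f := fun i => ∑ j, |(Am d.1).adjugate i j|)
      (fun k _ => Finset.sum_nonneg fun j _ => abs_nonneg _) (Finset.mem_univ i)
  exact h1.trans (hC (Set.mem_image_of_mem _ hdK))


theorem stmt16 {n : ℕ} (M : Matrix (Fin n) (Fin n) ℝ) (hM : IsPMatrix M)
    (q xstar : Fin n → ℝ) (hsol : IsLCPSolution M q xstar) (x : Fin n → ℝ) :
    ‖x - xstar‖ ≤
      (⨆ d : {d : Fin n → ℝ // ∀ i, 0 ≤ d i ∧ d i ≤ 1},
        linftyNorm (1 - Matrix.diagonal d.1 + Matrix.diagonal d.1 * M)⁻¹) *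
      ‖fun i => min (x i) ((M.mulVec x + q) i)‖ := by
  classical
  obtain ⟨hx0, hw0, hc⟩ := hsol
  have hstar : ∀ i, min (xstar i) ((M.mulVec xstar + q) i) = 0 := by
    intro i
    have hz : ∀ i ∈ Finset.univ, (M.mulVec xstar + q) i * xstar i = 0 :=
      (Finset.sum_eq_zero_iff_of_nonneg fun i _ => mul_nonneg (hw0 i) (hx0 i)).1 hc
    rcases mul_eq_zero.1 (hz i (Finset.mem_univ i)) with h | h
    · rw [h]; exact min_eq_right (hx0 i)
    · rw [h]; exact min_eq_left (hw0 i)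
  have hch : ∀ i : Fin n, ∃ t, 0 ≤ t ∧ t ≤ 1 ∧
      min (x i) ((M.mulVec x + q) i) - min (xstar i) ((M.mulVec xstar + q) i)
        = (1 - t) * (x i - xstar i)
          + t * ((M.mulVec x + q) i - (M.mulVec xstar + q) i) :=
    fun i => minMVT _ _ _ _
  choose d hd0 hd1 hdeq using hch
  have hdp : ∀ i, 0 ≤ d i ∧ d i ≤ 1 := fun i => ⟨hd0 i, hd1 i⟩
  set A := 1 - Matrix.diagonal d + Matrix.diagonal d * M with hA
  have hAdet : IsUnit A.det := isUnit_iff_ne_zero.2 (detPos M hM d hdp).ne'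
  have hAr : A.mulVec (x - xstar) = fun i => min (x i) ((M.mulVec x + q) i) := by
    funext i
    have h1 : A.mulVec (x - xstar) i
        = (x i - xstar i) - d i * (x i - xstar i)
          + d i * (M.mulVec (x - xstar)) i := by
      rw [hA]
      simp [Matrix.add_mulVec, Matrix.sub_mulVec, Matrix.one_mulVec,
        ← Matrix.mulVec_mulVec, Matrix.mulVec_diagonal, Pi.add_apply, Pi.sub_apply]
    have h2 : M.mulVec (x - xstar) i = (M.mulVec x + q) i - (M.mulVec xstar + q) i := by
      rw [Matrix.mulVec_sub]; simp
    have h3 := hdeq i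
    rw [hstar i] at h3
    rw [h1, h2]
    linear_combination -h3
  have hxx : x - xstar = A⁻¹.mulVec (fun i => min (x i) ((M.mulVec x + q) i)) := by
    rw [← hAr, Matrix.mulVec_mulVec, Matrix.nonsing_inv_mul A hAdet, Matrix.one_mulVec]
  rcases Nat.eq_zero_or_pos n with hn | hn
  · subst hn
    have e1 : x - xstar = 0 := funext fun i => i.elim0
    have e2 : (fun i => min (x i) ((M.mulVec x + q) i)) = (0 : Fin 0 → ℝ) :=
      funext fun i => i.elim0
    rw [e1, e2, norm_zero, mul_zero]
  · haveI : Nonempty (Fin n) := ⟨⟨0, hn⟩⟩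
    calc ‖x - xstar‖
        = ‖A⁻¹.mulVec (fun i => min (x i) ((M.mulVec x + q) i))‖ := by rw [hxx]
      _ ≤ linftyNorm A⁻¹ * ‖fun i => min (x i) ((M.mulVec x + q) i)‖ :=
          mulVec_norm_le _ _
      _ ≤ (⨆ d' : {d' : Fin n → ℝ // ∀ i, 0 ≤ d' i ∧ d' i ≤ 1},
            linftyNorm (1 - Matrix.diagonal d'.1 + Matrix.diagonal d'.1 * M)⁻¹) *
          ‖fun i => min (x i) ((M.mulVec x + q) i)‖ :=
          mul_le_mul_of_nonneg_right (le_ciSup (bddAboveLemma M hM) ⟨d, hdp⟩)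
            (norm_nonneg _)
end
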